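/- arXiv:2407.14851 — 5 statements merged into one kernel-verified Lean document; each statement's English description precedes it below -/
import Mathlib

section
/- Fix a > 0 and (x, y) with x² + y² < a². Let r(z) ≥ 0 be defined by r⁴ − r²(x² + y² + z² − a²) − a² z² = 0. Then lim_{z → 0} r(z)/|z| = a / √(a² − (x² + y²)). -/
open Filter

theorem radial_root_asymptotics_near_disk (a x y : ℝ) (ha : 0 < a)
    (hxy : x ^ 2 + y ^ 2 < a ^ 2) (r : ℝ → ℝ) (hr : ∀ z, 0 ≤ r z)
    (heq : ∀ z, (r z) ^ 4 - (r z) ^ 2 * (x ^ 2 + y ^ 2 + z ^ 2 - a ^ 2)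
        - a ^ 2 * z ^ 2 = 0) :
    Tendsto (fun z => r z / |z|) (nhdsWithin 0 {0}ᶜ)
      (nhds (a / Real.sqrt (a ^ 2 - (x ^ 2 + y ^ 2)))) := by
  set d : ℝ := a ^ 2 - (x ^ 2 + y ^ 2) with hdd
  have hd : 0 < d := by simp [hdd]; linarith
  -- z^2 is eventually small
  have h2 : Tendsto (fun z : ℝ => z ^ 2) (nhds 0) (nhds 0) := by
    simpa using ((continuous_pow 2).tendsto (0 : ℝ))
  have hev : ∀ᶠ z in nhds (0 : ℝ), z ^ 2 < d / 2 :=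
    h2.eventually_lt_const (half_pos hd)
  -- squeeze: r z ^ 2 → 0
  have hbound : ∀ z : ℝ, z ^ 2 < d / 2 → (r z) ^ 2 ≤ 2 * a ^ 2 * z ^ 2 / d := by
    intro z hz
    rw [le_div_iff₀ hd]
    nlinarith [heq z, hr z, sq_nonneg (r z),
      mul_nonneg (sq_nonneg (r z)) (by linarith : (0:ℝ) ≤ d / 2 - z ^ 2)]
  have hg : Tendsto (fun z : ℝ => 2 * a ^ 2 * z ^ 2 / d) (nhds 0) (nhds 0) := by
    have hc : Continuous fun z : ℝ => 2 * a ^ 2 * z ^ 2 / d := by continuity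
    simpa using hc.tendsto 0
  have ht0 : Tendsto (fun z => (r z) ^ 2) (nhds 0) (nhds 0) := by
    apply squeeze_zero' (Eventually.of_forall fun z => sq_nonneg (r z))
      (hev.mono fun z hz => hbound z hz) hg
  -- denominator tends to d
  have hden : Tendsto (fun z => (r z) ^ 2 - (x ^ 2 + y ^ 2 + z ^ 2 - a ^ 2)) (nhds 0)
      (nhds d) := by
    have hc : Tendsto (fun z : ℝ => x ^ 2 + y ^ 2 + z ^ 2 - a ^ 2) (nhds 0)
        (nhds (x ^ 2 + y ^ 2 + 0 - a ^ 2)) := by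
      exact ((tendsto_const_nhds.add h2).sub tendsto_const_nhds)
    have := ht0.sub hc
    simpa [hdd, sub_eq_iff_eq_add] using this.congr (fun z => rfl)
  have hratio : Tendsto (fun z => a ^ 2 / ((r z) ^ 2 - (x ^ 2 + y ^ 2 + z ^ 2 - a ^ 2)))
      (nhds 0) (nhds (a ^ 2 / d)) :=
    tendsto_const_nhds.div hden (ne_of_gt hd)
  -- main: (r z / |z|)^2 tendsto a^2/d within {0}ᶜ
  have hmain : Tendsto (fun z => (r z / |z|) ^ 2) (nhdsWithin 0 {0}ᶜ) (nhds (a ^ 2 / d)) := by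
    apply (hratio.mono_left nhdsWithin_le_nhds).congr'
    filter_upwards [eventually_nhdsWithin_of_eventually_nhds hev,
      self_mem_nhdsWithin] with z hz hz0
    have hzne : z ≠ 0 := hz0
    have hz2 : (0:ℝ) < z ^ 2 := by positivity
    have hcneg : x ^ 2 + y ^ 2 + z ^ 2 - a ^ 2 < 0 := by
      simp only [hdd] at hz; linarith
    have hdenpos : 0 < (r z) ^ 2 - (x ^ 2 + y ^ 2 + z ^ 2 - a ^ 2) := by
      nlinarith [sq_nonneg (r z)]
    rw [div_pow, sq_abs, div_eq_div_iff (ne_of_gt hdenpos) (ne_of_gt hz2)]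
    linear_combination -heq z
  -- take square roots
  have hsq : Tendsto (fun z => Real.sqrt ((r z / |z|) ^ 2)) (nhdsWithin 0 {0}ᶜ)
      (nhds (Real.sqrt (a ^ 2 / d))) :=
    (Real.continuous_sqrt.tendsto _).comp hmain
  have hval : Real.sqrt (a ^ 2 / d) = a / Real.sqrt d := by
    rw [Real.sqrt_div (sq_nonneg a), Real.sqrt_sq ha.le]
  have : Tendsto (fun z => r z / |z|) (nhdsWithin 0 {0}ᶜ) (nhds (Real.sqrt (a ^ 2 / d))) := by
    refine hsq.congr fun z => ?_
    exact Real.sqrt_sq (div_nonneg (hr z) (abs_nonneg z))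
  rwa [hval] at this
end

section
/- Let a ≠ 0 and η < 0, ξ real, E ≠ 0, and suppose there exists θ ∈ (0, π) with Θ(θ) := E²[η + cos²θ(a² − ξ²/sin²θ)] ≥ 0. Then |η| ≤ (a − ξ)². -/
theorem negative_carter_constraint (a η ξ E : ℝ) (ha : a ≠ 0) (hη : η < 0) (hE : E ≠ 0)
    (h : ∃ θ ∈ Set.Ioo 0 Real.pi,
      E ^ 2 * (η + (Real.cos θ) ^ 2 * (a ^ 2 - ξ ^ 2 / (Real.sin θ) ^ 2)) ≥ 0) :
    |η| ≤ (a - ξ) ^ 2 := by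
  obtain ⟨θ, ⟨h1, h2⟩, hge⟩ := h
  have hs : Real.sin θ > 0 := Real.sin_pos_of_pos_of_lt_pi h1 h2
  have hs2 : Real.sin θ ^ 2 > 0 := by positivity
  have hE2 : (0:ℝ) < E ^ 2 := by positivity
  have key : η + Real.cos θ ^ 2 * (a ^ 2 - ξ ^ 2 / Real.sin θ ^ 2) ≥ 0 :=
    nonneg_of_mul_nonneg_right hge hE2
  have key2 : η * Real.sin θ ^ 2 + Real.cos θ ^ 2 * (a ^ 2 * Real.sin θ ^ 2 - ξ ^ 2) ≥ 0 := by
    have h3 := mul_nonneg key hs2.le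
    have : (η + Real.cos θ ^ 2 * (a ^ 2 - ξ ^ 2 / Real.sin θ ^ 2)) * Real.sin θ ^ 2
        = η * Real.sin θ ^ 2 + Real.cos θ ^ 2 * (a ^ 2 * Real.sin θ ^ 2 - ξ ^ 2) := by
      field_simp
    linarith [this ▸ h3]
  have hpy := Real.sin_sq_add_cos_sq θ
  have hc : Real.cos θ ^ 2 = 1 - Real.sin θ ^ 2 := by linarith
  rw [hc] at key2
  rw [abs_of_neg hη]
  nlinarith [sq_nonneg (a * Real.sin θ ^ 2 - ξ), key2, hs2, mul_pos hs2 hs2]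
end

section
/- Let a ≠ 0 and η < 0, ξ real. If the quartic equation η − (ξ² + η − a²)μ² − a²μ⁴ = 0 has a real solution μ with 0 ≤ μ² < 1, then |η| ≤ a² and |a| − √|η| ≥ |ξ|. -/
theorem turning_point_constraints (a η ξ : ℝ) (ha : a ≠ 0) (hη : η < 0)
    (h : ∃ μ : ℝ, 0 ≤ μ ^ 2 ∧ μ ^ 2 < 1 ∧
      η - (ξ ^ 2 + η - a ^ 2) * μ ^ 2 - a ^ 2 * μ ^ 4 = 0) :
    |η| ≤ a ^ 2 ∧ |a| - Real.sqrt |η| ≥ |ξ| := by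
  obtain ⟨μ, hm0, hm1, heq⟩ := h
  set m : ℝ := μ ^ 2 with hm
  have hμ4 : μ ^ 4 = m ^ 2 := by rw [hm]; ring
  have key : ξ ^ 2 * m = (1 - m) * (a ^ 2 * m + η) := by nlinarith [heq, hμ4]
  have hmpos : 0 < m := by
    rcases lt_or_eq_of_le hm0 with h' | h'
    · exact h'
    · exfalso; nlinarith [key]
  have h1m : 0 < 1 - m := by linarith
  have hξ2 : 0 ≤ ξ ^ 2 * m := by positivity
  have hpos : 0 ≤ a ^ 2 * m + η := nonneg_of_mul_nonneg_right (key ▸ hξ2) h1m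
  have habs : |η| = -η := abs_of_neg hη
  have hpart1 : |η| ≤ a ^ 2 := by
    rw [habs]; nlinarith [sq_nonneg a]
  refine ⟨hpart1, ?_⟩
  set s : ℝ := Real.sqrt |η| with hs
  have hs0 : 0 ≤ s := Real.sqrt_nonneg _
  have hs2 : s ^ 2 = |η| := Real.sq_sqrt (abs_nonneg _)
  have hsle : s ≤ |a| := by
    calc s ≤ Real.sqrt (a ^ 2) := Real.sqrt_le_sqrt hpart1
    _ = |a| := Real.sqrt_sq_eq_abs a
  have ha2 : |a| ^ 2 = a ^ 2 := sq_abs a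
  have hkey2 : ξ ^ 2 * m ≤ m * (|a| - s) ^ 2 := by
    have hsq : 0 ≤ (|a| * m - s) ^ 2 := sq_nonneg _
    nlinarith [key, hs2, habs, ha2]
  have hξle : ξ ^ 2 ≤ (|a| - s) ^ 2 := le_of_mul_le_mul_right (by linarith [hkey2]) hmpos
  have : |ξ| ≤ |a| - s := by
    calc |ξ| = Real.sqrt (ξ ^ 2) := (Real.sqrt_sq_eq_abs ξ).symm
    _ ≤ Real.sqrt ((|a| - s) ^ 2) := Real.sqrt_le_sqrt hξle
    _ = |(|a| - s)| := Real.sqrt_sq_eq_abs _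
    _ = |a| - s := abs_of_nonneg (by linarith)
  linarith [this]
end

section
/- Let m₃ > 0, a > 0, ψ ∈ (−π, π). Define, for ρ > 0, r(ρ) = √(a(1 + cos ψ)ρ) and c(ρ) = ρ^{1/2} sin ψ / √(a(1 + cos ψ)) (so c(ρ) stands for cos θ), and set Σ = r² + a²c², λ₂ = 2r² · M′(r)/Σ² with M(r) = m₃ r³. Then lim_{ρ → 0⁺} λ₂(ρ) = 6 m₃ cos⁴(ψ/2). -/
open Filter

theorem effective_density_ring_limit (m₃ a ψ : ℝ) (hm : 0 < m₃) (ha : 0 < a)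
    (hψ : ψ ∈ Set.Ioo (-Real.pi) Real.pi) :
    let r : ℝ → ℝ := fun ρ => Real.sqrt (a * (1 + Real.cos ψ) * ρ)
    let c : ℝ → ℝ := fun ρ => ρ ^ (1/2 : ℝ) * Real.sin ψ / Real.sqrt (a * (1 + Real.cos ψ))
    let lam₂ : ℝ → ℝ := fun ρ =>
      2 * (r ρ) ^ 2 * (3 * m₃ * (r ρ) ^ 2) / ((r ρ) ^ 2 + a ^ 2 * (c ρ) ^ 2) ^ 2
    Tendsto lam₂ (nhdsWithin 0 (Set.Ioi 0)) (nhds (6 * m₃ * (Real.cos (ψ / 2)) ^ 4)) := by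
  intro r c lam₂
  have hcos : 0 < Real.cos (ψ / 2) := by
    apply Real.cos_pos_of_mem_Ioo
    constructor
    · linarith [hψ.1]
    · linarith [hψ.2]
  have hhalf : Real.cos ψ = 2 * Real.cos (ψ / 2) ^ 2 - 1 := by
    have h := Real.cos_two_mul (ψ / 2)
    have : 2 * (ψ / 2) = ψ := by ring
    rw [this] at h
    linarith
  have hc1 : 0 < 1 + Real.cos ψ := by nlinarith
  have hk : 0 < a * (1 + Real.cos ψ) := by positivity
  have key : ∀ ρ ∈ Set.Ioi (0:ℝ), lam₂ ρ = 6 * m₃ * Real.cos (ψ / 2) ^ 4 := by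
    intro ρ hρ
    have hρ0 : (0:ℝ) < ρ := hρ
    have hr2 : (r ρ) ^ 2 = a * (1 + Real.cos ψ) * ρ := Real.sq_sqrt (by positivity)
    have hc2 : (c ρ) ^ 2 = ρ * Real.sin ψ ^ 2 / (a * (1 + Real.cos ψ)) := by
      have hsq : ρ ^ (1/2 : ℝ) = Real.sqrt ρ := (Real.sqrt_eq_rpow ρ).symm
      simp only [c, hsq, div_pow, mul_pow, Real.sq_sqrt hρ0.le, Real.sq_sqrt hk.le]
    have hsin : Real.sin ψ ^ 2 = 1 - Real.cos ψ ^ 2 := by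
      have := Real.sin_sq_add_cos_sq ψ; linarith
    simp only [lam₂, hr2, hc2]
    rw [div_eq_iff (by
      have hden : a * (1 + Real.cos ψ) * ρ + a ^ 2 * (ρ * Real.sin ψ ^ 2 / (a * (1 + Real.cos ψ))) = 2 * a * ρ := by
        field_simp
        rw [hsin]; ring
      rw [hden]; positivity)]
    have hden : a * (1 + Real.cos ψ) * ρ + a ^ 2 * (ρ * Real.sin ψ ^ 2 / (a * (1 + Real.cos ψ))) = 2 * a * ρ := by
      field_simp
      rw [hsin]; ring
    rw [hden, hhalf]
    ring
  refine Tendsto.congr' ?_ tendsto_const_nhds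
  filter_upwards [self_mem_nhdsWithin] with ρ hρ
  exact (key ρ hρ).symm
end

section
/- Let a ≠ 0, ξ real with ξ² < a², and M(r) = c rⁿ with n ≥ 3 and c real. Define R(r) = r⁴ + (a² − ξ²)r² + 2M(r)(ξ − a)²r (the radial potential with η = 0, E = 1). Then √R is differentiable from the right at r = 0 with d√R/dr|_{r=0⁺} = √(a² − ξ²). In contrast, if M(r) = M > 0 is constant and ξ ≠ a, then √(R(r))/r → ∞ as r → 0⁺, so √R is not differentiable at r = 0. -/
open Filter

theorem ring_critical_point_linearizability (a ξ : ℝ) (ha : a ≠ 0) (hξ : ξ ^ 2 < a ^ 2) :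
    (∀ (c : ℝ) (n : ℕ), 3 ≤ n →
      HasDerivWithinAt
        (fun r : ℝ => Real.sqrt (r ^ 4 + (a ^ 2 - ξ ^ 2) * r ^ 2 +
          2 * (c * r ^ n) * (ξ - a) ^ 2 * r))
        (Real.sqrt (a ^ 2 - ξ ^ 2)) (Set.Ici 0) 0) ∧
    (∀ M : ℝ, 0 < M → ξ ≠ a →
      Tendsto
        (fun r : ℝ => Real.sqrt (r ^ 4 + (a ^ 2 - ξ ^ 2) * r ^ 2 +
          2 * M * (ξ - a) ^ 2 * r) / r)
        (nhdsWithin 0 (Set.Ioi 0)) atTop) := by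
  have hA : (0:ℝ) < a ^ 2 - ξ ^ 2 := by linarith
  constructor
  · intro c n hn
    rw [hasDerivWithinAt_iff_tendsto_slope]
    have hset : Set.Ici (0:ℝ) \ {0} = Set.Ioi 0 := Set.Ici_sdiff_left
    rw [hset]
    have key : ∀ r ∈ Set.Ioi (0:ℝ), slope (fun r : ℝ => Real.sqrt (r ^ 4 + (a ^ 2 - ξ ^ 2) * r ^ 2 +
          2 * (c * r ^ n) * (ξ - a) ^ 2 * r)) 0 r
        = Real.sqrt (r ^ 2 + (a ^ 2 - ξ ^ 2) + 2 * c * (ξ - a) ^ 2 * r ^ (n - 1)) := by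
      intro r hr
      have hr0 : (0:ℝ) < r := hr
      have hpow : r ^ (n + 1) = r ^ 2 * r ^ (n - 1) := by
        rw [← pow_add]; congr 1; omega
      have heq : r ^ 4 + (a ^ 2 - ξ ^ 2) * r ^ 2 + 2 * (c * r ^ n) * (ξ - a) ^ 2 * r
          = r ^ 2 * (r ^ 2 + (a ^ 2 - ξ ^ 2) + 2 * c * (ξ - a) ^ 2 * r ^ (n - 1)) := by
        rw [show n = (n - 1) + 1 by omega, pow_succ]
        ring_nf
        rw [show 1 + (n - 1) - 1 = n - 1 from by omega]
      have hf0 : Real.sqrt ((0:ℝ) ^ 4 + (a ^ 2 - ξ ^ 2) * (0:ℝ) ^ 2 +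
          2 * (c * (0:ℝ) ^ n) * (ξ - a) ^ 2 * 0) = 0 := by simp
      simp only [slope_def_field, hf0, sub_zero]
      rw [heq, Real.sqrt_mul (sq_nonneg r), Real.sqrt_sq hr0.le,
        mul_div_cancel_left₀ _ hr0.ne']
    have hcont : Tendsto (fun r : ℝ => Real.sqrt (r ^ 2 + (a ^ 2 - ξ ^ 2) +
          2 * c * (ξ - a) ^ 2 * r ^ (n - 1))) (nhds 0) (nhds (Real.sqrt (a ^ 2 - ξ ^ 2))) := by
        have h0 : (0:ℝ) ^ 2 + (a ^ 2 - ξ ^ 2) + 2 * c * (ξ - a) ^ 2 * (0:ℝ) ^ (n - 1)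
            = a ^ 2 - ξ ^ 2 := by
          rw [zero_pow (by omega : n - 1 ≠ 0)]; ring
        have : ContinuousAt (fun r : ℝ => Real.sqrt (r ^ 2 + (a ^ 2 - ξ ^ 2) +
            2 * c * (ξ - a) ^ 2 * r ^ (n - 1))) 0 :=
          (Real.continuous_sqrt.comp (by continuity)).continuousAt
        simpa [zero_pow (show n - 1 ≠ 0 by omega)] using this.tendsto
    exact Tendsto.congr' (eventually_nhdsWithin_of_forall fun r hr => (key r hr).symm)
      (hcont.mono_left nhdsWithin_le_nhds)
  · intro M hM hξa
    have hC : (0:ℝ) < 2 * M * (ξ - a) ^ 2 := by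
      have := sub_ne_zero_of_ne hξa
      positivity
    have key : ∀ r ∈ Set.Ioi (0:ℝ),
        Real.sqrt (r ^ 2 + (a ^ 2 - ξ ^ 2) + 2 * M * (ξ - a) ^ 2 / r)
        = Real.sqrt (r ^ 4 + (a ^ 2 - ξ ^ 2) * r ^ 2 + 2 * M * (ξ - a) ^ 2 * r) / r := by
      intro r hr
      have hr0 : (0:ℝ) < r := hr
      have heq : r ^ 4 + (a ^ 2 - ξ ^ 2) * r ^ 2 + 2 * M * (ξ - a) ^ 2 * r
          = r ^ 2 * (r ^ 2 + (a ^ 2 - ξ ^ 2) + 2 * M * (ξ - a) ^ 2 / r) := by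
        field_simp
      rw [heq, Real.sqrt_mul (sq_nonneg r), Real.sqrt_sq hr0.le,
        mul_div_assoc, mul_div_cancel_left₀ _ hr0.ne']
    refine Tendsto.congr' (eventually_nhdsWithin_of_forall key) ?_
    have hinner : Tendsto (fun r : ℝ => r ^ 2 + (a ^ 2 - ξ ^ 2) + 2 * M * (ξ - a) ^ 2 / r)
        (nhdsWithin 0 (Set.Ioi 0)) atTop := by
      have h1 : Tendsto (fun r : ℝ => 2 * M * (ξ - a) ^ 2 / r) (nhdsWithin 0 (Set.Ioi 0)) atTop := by
        simpa [div_eq_mul_inv] using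
          (tendsto_inv_nhdsGT_zero.const_mul_atTop hC)
      have h2 : Tendsto (fun r : ℝ => r ^ 2 + (a ^ 2 - ξ ^ 2)) (nhdsWithin 0 (Set.Ioi 0))
          (nhds ((0:ℝ) ^ 2 + (a ^ 2 - ξ ^ 2))) :=
        ((continuous_pow 2).add continuous_const).continuousAt.tendsto.mono_left nhdsWithin_le_nhds
      exact h2.add_atTop h1
    have hsq : Tendsto Real.sqrt atTop atTop := by
      refine tendsto_atTop_atTop.mpr fun b => ⟨b ^ 2, fun x hx => ?_⟩
      calc b ≤ |b| := le_abs_self b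
        _ = Real.sqrt (b ^ 2) := (Real.sqrt_sq_eq_abs b).symm
        _ ≤ Real.sqrt x := Real.sqrt_le_sqrt hx
    exact hsq.comp hinner
end
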